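/- arXiv:nlin/0501028 — 6 statements merged into one kernel-verified Lean document; each statement's English description precedes it below -/
import Mathlib

section
/- Under the change of variables ∂_x = ρ ∂_y, ∂_t = ∂_s - ρ u ∂_y, if φ satisfies φ_xx + (-1/4 + m λ - ρ² λ²) φ = 0 then the function φ̃ = √ρ · φ satisfies φ̃_yy + (-λ² + P λ + Q) φ̃ = 0, where P = m/ρ² and Q = -1/(4ρ²) - ρ_yy/(2ρ) + ρ_y²/(4ρ²). -/
/-- under the reciprocal transformation `∂_x = ρ ∂_y`, if `φ` satisfies the
Schrödinger spectral problem with energy-dependent potential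
`φ_xx + (-1/4 + m λ - ρ² λ²) φ = 0`, then `φ̃ = √ρ · φ` satisfies
`φ̃_yy + (-λ² + P λ + Q) φ̃ = 0` with `P = m/ρ²`,
`Q = -1/(4ρ²) - ρ_yy/(2ρ) + ρ_y²/(4ρ²)`.  All functions depend on the variable `y`
(the variable `s` plays the role of a parameter), and `∂_x g = ρ · ∂_y g`. -/
theorem spectral_problem_reciprocal_transform
    (ρ φ m : ℝ → ℝ) (lam : ℝ)
    (hρ : ContDiff ℝ (⊤ : ℕ∞) ρ) (hφ : ContDiff ℝ (⊤ : ℕ∞) φ) (hm : ContDiff ℝ (⊤ : ℕ∞) m)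
    (hρpos : ∀ y, 0 < ρ y)
    (hlax : ∀ y, ρ y * deriv (fun y' => ρ y' * deriv φ y') y
        + (-(1/4) + m y * lam - (ρ y) ^ 2 * lam ^ 2) * φ y = 0) :
    ∀ y, deriv (deriv (fun y' => Real.sqrt (ρ y') * φ y')) y
      + (-lam ^ 2 + (m y / (ρ y) ^ 2) * lam
          + (-(1 / (4 * (ρ y) ^ 2)) - deriv (deriv ρ) y / (2 * ρ y)
              + (deriv ρ y) ^ 2 / (4 * (ρ y) ^ 2)))
        * (Real.sqrt (ρ y) * φ y) = 0 := by
  intro y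
  have hrInf : ContDiff ℝ (⊤ : ℕ∞) ρ := hρ.of_le (by simp)
  have hpInf : ContDiff ℝ (⊤ : ℕ∞) φ := hφ.of_le (by simp)
  have hρd : Differentiable ℝ ρ := hrInf.differentiable (by simp)
  have hφd : Differentiable ℝ φ := hpInf.differentiable (by simp)
  have hρ1 : ContDiff ℝ (⊤ : ℕ∞) (deriv ρ) := (contDiff_infty_iff_deriv.mp hrInf).2
  have hφ1 : ContDiff ℝ (⊤ : ℕ∞) (deriv φ) := (contDiff_infty_iff_deriv.mp hpInf).2
  have hρ'd : Differentiable ℝ (deriv ρ) := hρ1.differentiable (by simp)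
  have hφ'd : Differentiable ℝ (deriv φ) := hφ1.differentiable (by simp)
  -- first derivative of √ρ · φ everywhere
  have hf : ∀ z, HasDerivAt (fun y' => Real.sqrt (ρ y') * φ y')
      (deriv ρ z / (2 * Real.sqrt (ρ z)) * φ z + Real.sqrt (ρ z) * deriv φ z) z := by
    intro z
    exact ((hρd z).hasDerivAt.sqrt (ne_of_gt (hρpos z))).mul (hφd z).hasDerivAt
  have hderiv1 : deriv (fun y' => Real.sqrt (ρ y') * φ y')
      = fun z => deriv ρ z / (2 * Real.sqrt (ρ z)) * φ z + Real.sqrt (ρ z) * deriv φ z :=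
    funext fun z => (hf z).deriv
  -- second derivative at y
  have hspos : 0 < Real.sqrt (ρ y) := Real.sqrt_pos.mpr (hρpos y)
  have hsq : HasDerivAt (fun z => Real.sqrt (ρ z)) (deriv ρ y / (2 * Real.sqrt (ρ y))) y :=
    (hρd y).hasDerivAt.sqrt (ne_of_gt (hρpos y))
  have hden : HasDerivAt (fun z => 2 * Real.sqrt (ρ z))
      (2 * (deriv ρ y / (2 * Real.sqrt (ρ y)))) y := hsq.const_mul 2
  have hA : HasDerivAt (fun z => deriv ρ z / (2 * Real.sqrt (ρ z)))
      ((deriv (deriv ρ) y * (2 * Real.sqrt (ρ y))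
        - deriv ρ y * (2 * (deriv ρ y / (2 * Real.sqrt (ρ y))))) / (2 * Real.sqrt (ρ y)) ^ 2) y :=
    (hρ'd y).hasDerivAt.div hden (by positivity)
  have hg : HasDerivAt (fun z => deriv ρ z / (2 * Real.sqrt (ρ z)) * φ z
      + Real.sqrt (ρ z) * deriv φ z)
      (((deriv (deriv ρ) y * (2 * Real.sqrt (ρ y))
          - deriv ρ y * (2 * (deriv ρ y / (2 * Real.sqrt (ρ y))))) / (2 * Real.sqrt (ρ y)) ^ 2)
          * φ y + (deriv ρ y / (2 * Real.sqrt (ρ y))) * deriv φ y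
        + ((deriv ρ y / (2 * Real.sqrt (ρ y))) * deriv φ y
          + Real.sqrt (ρ y) * deriv (deriv φ) y)) y :=
    (hA.mul (hφd y).hasDerivAt).add (hsq.mul (hφ'd y).hasDerivAt)
  have h2 : deriv (deriv (fun y' => Real.sqrt (ρ y') * φ y')) y
      = ((deriv (deriv ρ) y * (2 * Real.sqrt (ρ y))
          - deriv ρ y * (2 * (deriv ρ y / (2 * Real.sqrt (ρ y))))) / (2 * Real.sqrt (ρ y)) ^ 2)
          * φ y + (deriv ρ y / (2 * Real.sqrt (ρ y))) * deriv φ y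
        + ((deriv ρ y / (2 * Real.sqrt (ρ y))) * deriv φ y
          + Real.sqrt (ρ y) * deriv (deriv φ) y) := by
    rw [hderiv1]; exact hg.deriv
  -- Lax equation at y, with the inner derivative expanded
  have hin : deriv (fun y' => ρ y' * deriv φ y') y
      = deriv ρ y * deriv φ y + ρ y * deriv (deriv φ) y :=
    ((hρd y).hasDerivAt.mul (hφ'd y).hasDerivAt).deriv
  have hE := hlax y
  rw [hin] at hE
  -- solve for φ''
  have hρy : (ρ y) ≠ 0 := ne_of_gt (hρpos y)
  have hp2 : deriv (deriv φ) y
      = ((1/4 - m y * lam + (ρ y) ^ 2 * lam ^ 2) * φ y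
          - ρ y * deriv ρ y * deriv φ y) / (ρ y) ^ 2 := by
    field_simp
    nlinarith [hE]
  rw [h2, hp2]
  have hsq2 : Real.sqrt (ρ y) ^ 2 = ρ y := Real.sq_sqrt (le_of_lt (hρpos y))
  set s := Real.sqrt (ρ y) with hsdef
  rw [show ρ y = s ^ 2 from hsq2.symm]
  have hs0 : s ≠ 0 := ne_of_gt hspos
  field_simp
  ring
end

section
/- The compatibility conditions of the linear system φ_yy + (-λ² + P λ + Q) φ = 0, φ_s + (ρ/(2λ)) φ_y - (ρ_y/(4λ)) φ = 0, holding for all λ ≠ 0, are equivalent to the three equations P_s = ρ_y, Q_s + (1/2) ρ P_y + P ρ_y = 0, and (1/2) ρ Q_y + Q ρ_y + (1/4) ρ_yyy = 0. -/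
noncomputable def pdy (f : ℝ → ℝ → ℝ) : ℝ → ℝ → ℝ := fun y s => deriv (fun y' => f y' s) y

noncomputable def pds (f : ℝ → ℝ → ℝ) : ℝ → ℝ → ℝ := fun y s => deriv (fun s' => f y s') s

def Smooth2 (f : ℝ → ℝ → ℝ) : Prop := ContDiff ℝ (⊤ : ℕ∞) (fun p : ℝ × ℝ => f p.1 p.2)

/-- compatibility of the linear system
`φ_yy = (λ² - Pλ - Q) φ`, `φ_s = -(ρ/(2λ)) φ_y + (ρ_y/(4λ)) φ` for all `λ ≠ 0`.
Compatibility means that the two ways of computing the mixed derivative `φ_yys`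
(once by differentiating the first equation in `s`, once by differentiating the
second equation twice in `y`, eliminating `φ_yy` and `φ_s` by the equations) agree
for all values `v = φ`, `w = φ_y` of the Cauchy data at a point.  This is equivalent
to the three equations `P_s = ρ_y`, `Q_s + (1/2)ρ P_y + P ρ_y = 0`,
`(1/2)ρ Q_y + Q ρ_y + (1/4)ρ_yyy = 0`. -/
theorem compatibility_conditions
    (P Q ρ : ℝ → ℝ → ℝ)
    (hP : Smooth2 P) (hQ : Smooth2 Q) (hρ : Smooth2 ρ) :
    (∀ lam : ℝ, lam ≠ 0 → ∀ y s v w : ℝ,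
      -- `∂_s φ_yy` computed from the first equation, eliminating `φ_s` by the second:
      (-(pds P y s) * lam - pds Q y s) * v
        + (lam ^ 2 - P y s * lam - Q y s)
            * ((-(ρ y s) / (2 * lam)) * w + (pdy ρ y s / (4 * lam)) * v)
      =
      -- `∂_y ∂_y φ_s` computed from the second equation, eliminating `φ_yy`, `φ_yyy`
      -- by the first equation and its `y`-derivative:
      ((-(pdy (pdy ρ) y s) / (2 * lam)) + 2 * (pdy (pdy ρ) y s / (4 * lam))
          + (-(ρ y s) / (2 * lam)) * (lam ^ 2 - P y s * lam - Q y s)) * w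
        + ((2 * (-(pdy ρ y s) / (2 * lam)) + pdy ρ y s / (4 * lam))
              * (lam ^ 2 - P y s * lam - Q y s)
            + (-(ρ y s) / (2 * lam)) * (-(pdy P y s) * lam - pdy Q y s)
            + pdy (pdy (pdy ρ)) y s / (4 * lam)) * v)
    ↔
    (∀ y s : ℝ,
      pds P y s = pdy ρ y s
      ∧ pds Q y s + (1/2) * ρ y s * pdy P y s + P y s * pdy ρ y s = 0
      ∧ (1/2) * ρ y s * pdy Q y s + Q y s * pdy ρ y s
          + (1/4) * pdy (pdy (pdy ρ)) y s = 0) := by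
  constructor
  · intro h y s
    have h1 := h 1 one_ne_zero y s 1 0
    have h2 := h (-1) (by norm_num) y s 1 0
    have h3 := h 2 (by norm_num) y s 1 0
    norm_num at h1 h2 h3
    refine ⟨?_, ?_, ?_⟩ <;> nlinarith [h1, h2, h3]
  · intro h lam hlam y s v w
    obtain ⟨e1, e2, e3⟩ := h y s
    field_simp
    linear_combination (-8 * lam ^ 2 * v) * e1 + (-8 * lam * v) * e2 + (-8 * v) * e3
end

section
/- Let f(y,s) be a smooth solution of the primary equation f_ss/(2 f_s³) + f_y f_ys - f_ss f_ys²/(2 f_s³) + f_ys f_yss/(2 f_s²) + (1/2) f_s f_yy + f_ss f_yys/(2 f_s²) - f_yyss/(2 f_s) = 0 with f_s never zero. Define u = f_y f_s² + f_ss f_ys/f_s - f_yss and ρ = f_s. Then the identity u - ρ (ρ u_y)_y = f_s² f_y holds (i.e. m = u - u_xx = ρ² P under the reciprocal transformation ∂_x = ρ ∂_y). -/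
/-- The primary equation (equation (14) of the paper) for `f(y,s)`. -/
def PrimaryEq (f : ℝ → ℝ → ℝ) : Prop :=
  ∀ y s : ℝ,
    pds (pds f) y s / (2 * (pds f y s) ^ 3)
      + pdy f y s * pds (pdy f) y s
      - pds (pds f) y s * (pds (pdy f) y s) ^ 2 / (2 * (pds f y s) ^ 3)
      + pds (pdy f) y s * pds (pds (pdy f)) y s / (2 * (pds f y s) ^ 2)
      + (1/2) * pds f y s * pdy (pdy f) y s
      + pds (pds f) y s * pds (pdy (pdy f)) y s / (2 * (pds f y s) ^ 2)
      - pds (pds (pdy (pdy f))) y s / (2 * pds f y s) = 0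

namespace Aux

variable {f : ℝ → ℝ → ℝ}

theorem hasDerivAt_pdy (hf : Smooth2 f) (y s : ℝ) :
    HasDerivAt (fun y' => f y' s) (pdy f y s) y := by
  have hF : DifferentiableAt ℝ (fun p : ℝ × ℝ => f p.1 p.2) (y, s) :=
    (hf.differentiable (by simp)).differentiableAt
  have hL : HasDerivAt (fun y' : ℝ => (y', s)) ((1 : ℝ), (0 : ℝ)) y :=
    (hasDerivAt_id y).prodMk (hasDerivAt_const y s)
  have h := hF.hasFDerivAt.comp_hasDerivAt y hL
  have : pdy f y s = (fderiv ℝ (fun p : ℝ × ℝ => f p.1 p.2) (y, s)) (1, 0) := by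
    rw [pdy]; exact h.deriv
  rw [this]; exact h

theorem hasDerivAt_pds (hf : Smooth2 f) (y s : ℝ) :
    HasDerivAt (fun s' => f y s') (pds f y s) s := by
  have hF : DifferentiableAt ℝ (fun p : ℝ × ℝ => f p.1 p.2) (y, s) :=
    (hf.differentiable (by simp)).differentiableAt
  have hL : HasDerivAt (fun s' : ℝ => (y, s')) ((0 : ℝ), (1 : ℝ)) s :=
    (hasDerivAt_const s y).prodMk (hasDerivAt_id s)
  have h := hF.hasFDerivAt.comp_hasDerivAt s hL
  have : pds f y s = (fderiv ℝ (fun p : ℝ × ℝ => f p.1 p.2) (y, s)) (0, 1) := by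
    rw [pds]; exact h.deriv
  rw [this]; exact h

theorem pdy_eq_fderiv (hf : Smooth2 f) (y s : ℝ) :
    pdy f y s = (fderiv ℝ (fun p : ℝ × ℝ => f p.1 p.2) (y, s)) (1, 0) := by
  have hF : DifferentiableAt ℝ (fun p : ℝ × ℝ => f p.1 p.2) (y, s) :=
    (hf.differentiable (by simp)).differentiableAt
  have hL : HasDerivAt (fun y' : ℝ => (y', s)) ((1 : ℝ), (0 : ℝ)) y :=
    (hasDerivAt_id y).prodMk (hasDerivAt_const y s)
  exact (hF.hasFDerivAt.comp_hasDerivAt y hL).deriv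

theorem pds_eq_fderiv (hf : Smooth2 f) (y s : ℝ) :
    pds f y s = (fderiv ℝ (fun p : ℝ × ℝ => f p.1 p.2) (y, s)) (0, 1) := by
  have hF : DifferentiableAt ℝ (fun p : ℝ × ℝ => f p.1 p.2) (y, s) :=
    (hf.differentiable (by simp)).differentiableAt
  have hL : HasDerivAt (fun s' : ℝ => (y, s')) ((0 : ℝ), (1 : ℝ)) s :=
    (hasDerivAt_const s y).prodMk (hasDerivAt_id s)
  exact (hF.hasFDerivAt.comp_hasDerivAt s hL).deriv

theorem smooth_fderiv_apply (hf : Smooth2 f) (v : ℝ × ℝ) :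
    ContDiff ℝ (⊤ : ℕ∞) (fun p : ℝ × ℝ => fderiv ℝ (fun q : ℝ × ℝ => f q.1 q.2) p v) :=
  ((hf.fderiv_right (m := (⊤ : ℕ∞)) le_rfl).clm_apply contDiff_const)

theorem smooth_pdy (hf : Smooth2 f) : Smooth2 (pdy f) := by
  have h := smooth_fderiv_apply hf (1, 0)
  have heq : (fun p : ℝ × ℝ => pdy f p.1 p.2)
      = fun p : ℝ × ℝ => fderiv ℝ (fun q : ℝ × ℝ => f q.1 q.2) p (1, 0) :=
    funext fun p => pdy_eq_fderiv hf p.1 p.2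
  rw [Smooth2, heq]; exact h

theorem smooth_pds (hf : Smooth2 f) : Smooth2 (pds f) := by
  have h := smooth_fderiv_apply hf (0, 1)
  have heq : (fun p : ℝ × ℝ => pds f p.1 p.2)
      = fun p : ℝ × ℝ => fderiv ℝ (fun q : ℝ × ℝ => f q.1 q.2) p (0, 1) :=
    funext fun p => pds_eq_fderiv hf p.1 p.2
  rw [Smooth2, heq]; exact h

theorem clairaut (hf : Smooth2 f) : pdy (pds f) = pds (pdy f) := by
  funext y s
  set F : ℝ × ℝ → ℝ := fun p => f p.1 p.2 with hFdef
  have hdF : Differentiable ℝ F := hf.differentiable (by simp)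
  have hfd : ∀ p : ℝ × ℝ, HasFDerivAt F (fderiv ℝ F p) p := fun p =>
    (hdF p).hasFDerivAt
  have hdF' : DifferentiableAt ℝ (fderiv ℝ F) (y, s) :=
    ((hf.fderiv_right (m := (⊤ : ℕ∞)) le_rfl).differentiable (by simp)).differentiableAt
  have hsymm := second_derivative_symmetric hfd hdF'.hasFDerivAt
      ((1 : ℝ), (0 : ℝ)) ((0 : ℝ), (1 : ℝ))
  -- pdy (pds f) y s = fderiv (fun p => fderiv F p (0,1)) (y,s) (1,0)
  have h1 : pdy (pds f) y s
      = fderiv ℝ (fun p : ℝ × ℝ => fderiv ℝ F p (0, 1)) (y, s) (1, 0) := by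
    have := pdy_eq_fderiv (smooth_pds hf) y s
    rw [this]
    congr 1
    apply Filter.EventuallyEq.fderiv_eq
    filter_upwards with p
    exact pds_eq_fderiv hf p.1 p.2
  have h2 : pds (pdy f) y s
      = fderiv ℝ (fun p : ℝ × ℝ => fderiv ℝ F p (1, 0)) (y, s) (0, 1) := by
    have := pds_eq_fderiv (smooth_pdy hf) y s
    rw [this]
    congr 1
    apply Filter.EventuallyEq.fderiv_eq
    filter_upwards with p
    exact pdy_eq_fderiv hf p.1 p.2
  have e1 : fderiv ℝ (fun p : ℝ × ℝ => fderiv ℝ F p (0, 1)) (y, s) (1, 0)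
      = (fderiv ℝ (fderiv ℝ F) (y, s)) (1, 0) (0, 1) := by
    rw [fderiv_clm_apply hdF' (differentiableAt_const _)]
    simp
  have e2 : fderiv ℝ (fun p : ℝ × ℝ => fderiv ℝ F p (1, 0)) (y, s) (0, 1)
      = (fderiv ℝ (fderiv ℝ F) (y, s)) (0, 1) (1, 0) := by
    rw [fderiv_clm_apply hdF' (differentiableAt_const _)]
    simp
  rw [h1, h2, e1, e2, hsymm]

end Aux

/-- for a primary solution `f` with `f_s ≠ 0`, setting
`u = f_y f_s² + f_ss f_ys / f_s - f_yss` and `ρ = f_s`, the identity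
`u - ρ (ρ u_y)_y = f_s² f_y` holds (i.e. `m = u - u_xx = ρ² P` under `∂_x = ρ ∂_y`). -/
theorem primary_solution_gives_m
    (f : ℝ → ℝ → ℝ) (hf : Smooth2 f)
    (hfs : ∀ y s, pds f y s ≠ 0)
    (hE : PrimaryEq f)
    (u ρ : ℝ → ℝ → ℝ)
    (hu : ∀ y s, u y s = pdy f y s * (pds f y s) ^ 2
        + pds (pds f) y s * pds (pdy f) y s / pds f y s - pds (pds (pdy f)) y s)
    (hρ : ∀ y s, ρ y s = pds f y s) :
    ∀ y s, u y s - ρ y s * pdy (fun y s => ρ y s * pdy u y s) y s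
      = (pds f y s) ^ 2 * pdy f y s := by
  have sa : Smooth2 (pdy f) := Aux.smooth_pdy hf
  have sb : Smooth2 (pds f) := Aux.smooth_pds hf
  have se : Smooth2 (pds (pds f)) := Aux.smooth_pds sb
  have sd : Smooth2 (pds (pdy f)) := Aux.smooth_pds sa
  have sq : Smooth2 (pds (pds (pdy f))) := Aux.smooth_pds sd
  have c1 : pdy (pds f) = pds (pdy f) := Aux.clairaut hf
  have c2 : pdy (pds (pdy f)) = pds (pdy (pdy f)) := Aux.clairaut sa
  have c3 : pdy (pds (pds f)) = pds (pds (pdy f)) :=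
    (Aux.clairaut sb).trans (congrArg pds c1)
  have c4 : pdy (pds (pds (pdy f))) = pds (pds (pdy (pdy f))) :=
    (Aux.clairaut sd).trans (congrArg pds c2)
  -- key lemma : u_y = - f_ss / f_s^2
  have huy : ∀ y s, pdy u y s = - pds (pds f) y s / (pds f y s) ^ 2 := by
    intro y s
    have Da := Aux.hasDerivAt_pdy sa y s
    have Db := Aux.hasDerivAt_pdy sb y s
    have De := Aux.hasDerivAt_pdy se y s
    have Dd := Aux.hasDerivAt_pdy sd y s
    have Dq := Aux.hasDerivAt_pdy sq y s
    rw [c1] at Db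
    rw [c2] at Dd
    rw [c3] at De
    rw [c4] at Dq
    have H := ((Da.mul (Db.pow 2)).add ((De.mul Dd).div Db (hfs y s))).sub Dq
    have hfun : (fun y' => u y' s) = (fun y' => pdy f y' s * (pds f y' s) ^ 2
        + pds (pds f) y' s * pds (pdy f) y' s / pds f y' s - pds (pds (pdy f)) y' s) :=
      funext fun y' => hu y' s
    rw [pdy, hfun, (by exact H.deriv : deriv (fun y' => pdy f y' s * (pds f y' s) ^ 2
        + pds (pds f) y' s * pds (pdy f) y' s / pds f y' s - pds (pds (pdy f)) y' s) y = _)]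
    simp only [Pi.pow_apply, Pi.mul_apply, Nat.cast_ofNat, pow_one]
    have hE' := hE y s
    have hb := hfs y s
    field_simp at hE' ⊢
    have h16 : (16 : ℝ) * pds f y s ^ 5 ≠ 0 :=
      mul_ne_zero (by norm_num) (pow_ne_zero _ hb)
    apply mul_left_cancel₀ h16
    linear_combination (16 * pds f y s ^ 5) * hE'
  intro y s
  -- inner function g = ρ * u_y = - f_ss / f_s
  have hg : ∀ y' s', ρ y' s' * pdy u y' s' = - pds (pds f) y' s' / pds f y' s' := by
    intro y' s'
    rw [hρ, huy]
    field_simp [hfs y' s']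
  have De := Aux.hasDerivAt_pdy se y s
  have Db := Aux.hasDerivAt_pdy sb y s
  rw [c1] at Db
  rw [c3] at De
  have H := (De.neg.div Db (hfs y s))
  have hfun : (fun y' => ρ y' s * pdy u y' s)
      = (fun y' => - pds (pds f) y' s / pds f y' s) := funext fun y' => hg y' s
  have hpg : pdy (fun y s => ρ y s * pdy u y s) y s
      = (- pds (pds (pdy f)) y s * pds f y s
          - (- pds (pds f) y s) * pds (pdy f) y s) / (pds f y s) ^ 2 := by
    rw [pdy, hfun]; exact H.deriv
  rw [hpg, hu, hρ]
  have hb := hfs y s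
  field_simp
  ring
end

section
/- If f(y,s) is a smooth solution of the primary equation f_ss/(2 f_s³) + f_y f_ys - f_ss f_ys²/(2 f_s³) + f_ys f_yss/(2 f_s²) + (1/2) f_s f_yy + f_ss f_yys/(2 f_s²) - f_yyss/(2 f_s) = 0 with f_s ≠ 0, then the function x(y,s) := f(s,y) (swapping the two arguments) satisfies the dual equation x_ss + 2 x_s x_ys/x_y + x_yy/x_y⁴ - x_ys² x_yy/x_y⁴ + x_yss x_yy/x_y³ + x_ys x_yys/x_y³ - x_yyss/x_y² = 0. -/
/-- The dual primary equation (equation (32) of the paper) for `x(y,s)`. -/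
def DualEq (x : ℝ → ℝ → ℝ) : Prop :=
  ∀ y s : ℝ,
    pds (pds x) y s
      + 2 * pds x y s * pds (pdy x) y s / pdy x y s
      + pdy (pdy x) y s / (pdy x y s) ^ 4
      - (pds (pdy x) y s) ^ 2 * pdy (pdy x) y s / (pdy x y s) ^ 4
      + pds (pds (pdy x)) y s * pdy (pdy x) y s / (pdy x y s) ^ 3
      + pds (pdy x) y s * pds (pdy (pdy x)) y s / (pdy x y s) ^ 3
      - pds (pds (pdy (pdy x))) y s / (pdy x y s) ^ 2 = 0

section Aux

variable {g : ℝ → ℝ → ℝ}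

private lemma pdy_eq_fderiv (h : Smooth2 g) (y s : ℝ) :
    pdy g y s = fderiv ℝ (fun p : ℝ × ℝ => g p.1 p.2) (y, s) (1, 0) :=
  by
  have hF := (h.differentiable (by simp : ((⊤ : ℕ∞) : WithTop ℕ∞) ≠ 0) (y, s)).hasFDerivAt
  exact (hF.comp_hasDerivAt y ((hasDerivAt_id' y).prodMk (hasDerivAt_const y s))).deriv

private lemma pds_eq_fderiv (h : Smooth2 g) (y s : ℝ) :
    pds g y s = fderiv ℝ (fun p : ℝ × ℝ => g p.1 p.2) (y, s) (0, 1) :=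
  ((h.differentiable (by simp) (y, s)).hasFDerivAt.comp_hasDerivAt s
    ((hasDerivAt_const s y).prodMk (hasDerivAt_id s))).deriv

private lemma smooth_fderiv_apply {G : ℝ × ℝ → ℝ} (hG : ContDiff ℝ (⊤ : ℕ∞) G) (v : ℝ × ℝ) :
    ContDiff ℝ (⊤ : ℕ∞) (fun p => fderiv ℝ G p v) :=
  (hG.fderiv_right (by simp)).clm_apply contDiff_const

private lemma smooth_pdy (h : Smooth2 g) : Smooth2 (pdy g) := by
  have : (fun p : ℝ × ℝ => pdy g p.1 p.2)
      = fun p => fderiv ℝ (fun p : ℝ × ℝ => g p.1 p.2) p (1, 0) :=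
    funext fun p => pdy_eq_fderiv h p.1 p.2
  unfold Smooth2
  rw [this]
  exact smooth_fderiv_apply h _

private lemma smooth_pds (h : Smooth2 g) : Smooth2 (pds g) := by
  have : (fun p : ℝ × ℝ => pds g p.1 p.2)
      = fun p => fderiv ℝ (fun p : ℝ × ℝ => g p.1 p.2) p (0, 1) :=
    funext fun p => pds_eq_fderiv h p.1 p.2
  unfold Smooth2
  rw [this]
  exact smooth_fderiv_apply h _

private lemma fderiv_fderiv_apply {G : ℝ × ℝ → ℝ} (hG : ContDiff ℝ (⊤ : ℕ∞) G) (x v w : ℝ × ℝ) :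
    fderiv ℝ (fun p => fderiv ℝ G p v) x w = fderiv ℝ (fderiv ℝ G) x w v := by
  rw [fderiv_clm_apply ((hG.fderiv_right (m := (⊤ : ℕ∞)) (by simp)).differentiable (by simp) x)
    (differentiableAt_const v)]
  simp

private lemma clairaut (h : Smooth2 g) : pdy (pds g) = pds (pdy g) := by
  funext y s
  set G : ℝ × ℝ → ℝ := fun p : ℝ × ℝ => g p.1 p.2 with hGdef
  have hpdy : (fun p : ℝ × ℝ => pdy g p.1 p.2) = fun p => fderiv ℝ G p (1, 0) :=
    funext fun p => pdy_eq_fderiv h p.1 p.2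
  have hpds : (fun p : ℝ × ℝ => pds g p.1 p.2) = fun p => fderiv ℝ G p (0, 1) :=
    funext fun p => pds_eq_fderiv h p.1 p.2
  have h1 : pdy (pds g) y s = fderiv ℝ (fun p => fderiv ℝ G p (0, 1)) (y, s) (1, 0) := by
    have := pdy_eq_fderiv (smooth_pds h) y s; rwa [hpds] at this
  have h2 : pds (pdy g) y s = fderiv ℝ (fun p => fderiv ℝ G p (1, 0)) (y, s) (0, 1) := by
    have := pds_eq_fderiv (smooth_pdy h) y s; rwa [hpdy] at this
  rw [h1, h2, fderiv_fderiv_apply h, fderiv_fderiv_apply h]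
  exact second_derivative_symmetric (fun p => (h.differentiable (by simp) p).hasFDerivAt)
    (((h.fderiv_right (m := (⊤ : ℕ∞)) (by simp)).differentiable (by simp) (y, s)).hasFDerivAt) _ _

end Aux

/-- if `f` solves the primary equation with `f_s ≠ 0`, then
`x(y,s) := f(s,y)` satisfies the dual equation. -/
theorem primary_to_dual
    (f : ℝ → ℝ → ℝ) (hf : Smooth2 f)
    (hfs : ∀ y s, pds f y s ≠ 0)
    (hE : PrimaryEq f) :
    DualEq (fun y s => f s y) := by
  intro y s
  show pdy (pdy f) s y
      + 2 * pdy f s y * pdy (pds f) s y / pds f s y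
      + pds (pds f) s y / (pds f s y) ^ 4
      - (pdy (pds f) s y) ^ 2 * pds (pds f) s y / (pds f s y) ^ 4
      + pdy (pdy (pds f)) s y * pds (pds f) s y / (pds f s y) ^ 3
      + pdy (pds f) s y * pdy (pds (pds f)) s y / (pds f s y) ^ 3
      - pdy (pdy (pds (pds f))) s y / (pds f s y) ^ 2 = 0
  simp only [clairaut hf, clairaut (smooth_pdy hf), clairaut (smooth_pds hf),
    clairaut (smooth_pds (smooth_pdy hf)), clairaut (smooth_pdy (smooth_pds hf)),
    clairaut (smooth_pds (smooth_pds hf))]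
  have h := hE s y
  have ha := hfs s y
  linear_combination (2 / pds f s y) * h - pdy (pdy f) s y * mul_inv_cancel₀ ha
end

section
/- Let f(y,s) be a smooth solution of the primary equation f_ss/(2 f_s³) + f_y f_ys - f_ss f_ys²/(2 f_s³) + f_ys f_yss/(2 f_s²) + (1/2) f_s f_yy + f_ss f_yys/(2 f_s²) - f_yyss/(2 f_s) = 0 with f_s ≠ 0, and let ε = ±1. Define q = (e^{f}/2)(f_y + (ε - f_ys)/f_s), r = (e^{-f}/2)(f_y - (ε - f_ys)/f_s), b = 2 q_s, c = 2 r_s, a = (b e^{-f} - c e^{f})/2. Then b_y = 2 a q, c_y = 2 a r, and a² + b c = ε² = 1, so (a,b,c,q,r) solves the first negative flow of the AKNS hierarchy. -/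
namespace AKNSaux
variable {f : ℝ → ℝ → ℝ}

lemma diffS (hf : Smooth2 f) (y s : ℝ) : DifferentiableAt ℝ (fun s' => f y s') s := by
  have : (fun s' => f y s') = (fun p : ℝ × ℝ => f p.1 p.2) ∘ (fun s' => (y, s')) := rfl
  rw [this]
  exact ((hf.differentiable (by simp)) (y, s)).comp s
    ((differentiableAt_const y).prodMk differentiableAt_id)

lemma diffY (hf : Smooth2 f) (y s : ℝ) : DifferentiableAt ℝ (fun y' => f y' s) y := by
  have : (fun y' => f y' s) = (fun p : ℝ × ℝ => f p.1 p.2) ∘ (fun y' => (y', s)) := rfl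
  rw [this]
  exact ((hf.differentiable (by simp)) (y, s)).comp y
    (differentiableAt_id.prodMk (differentiableAt_const s))

lemma hasDerivS (hf : Smooth2 f) (y s : ℝ) :
    HasDerivAt (fun s' => f y s') (pds f y s) s := (diffS hf y s).hasDerivAt

lemma hasDerivY (hf : Smooth2 f) (y s : ℝ) :
    HasDerivAt (fun y' => f y' s) (pdy f y s) y := (diffY hf y s).hasDerivAt

lemma pds_eq_fderiv (hf : Smooth2 f) (y s : ℝ) :
    pds f y s = fderiv ℝ (fun p : ℝ × ℝ => f p.1 p.2) (y, s) ((0 : ℝ), (1 : ℝ)) := by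
  have hcurve : HasDerivAt (fun s' : ℝ => ((y, s') : ℝ × ℝ)) ((0 : ℝ), (1 : ℝ)) s :=
    (hasDerivAt_const s y).prodMk (hasDerivAt_id s)
  have := (((hf.differentiable (by simp)) (y, s)).hasFDerivAt).comp_hasDerivAt s hcurve
  exact this.deriv.symm ▸ rfl

lemma pdy_eq_fderiv (hf : Smooth2 f) (y s : ℝ) :
    pdy f y s = fderiv ℝ (fun p : ℝ × ℝ => f p.1 p.2) (y, s) ((1 : ℝ), (0 : ℝ)) := by
  have hcurve : HasDerivAt (fun y' : ℝ => ((y', s) : ℝ × ℝ)) ((1 : ℝ), (0 : ℝ)) y :=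
    (hasDerivAt_id y).prodMk (hasDerivAt_const y s)
  have := (((hf.differentiable (by simp)) (y, s)).hasFDerivAt).comp_hasDerivAt y hcurve
  exact this.deriv.symm ▸ rfl

lemma smooth2_pds (hf : Smooth2 f) : Smooth2 (pds f) := by
  have h : (fun p : ℝ × ℝ => pds f p.1 p.2)
      = fun p : ℝ × ℝ => fderiv ℝ (fun p : ℝ × ℝ => f p.1 p.2) p ((0 : ℝ), (1 : ℝ)) := by
    funext p
    exact pds_eq_fderiv hf p.1 p.2
  rw [Smooth2, h]
  exact (hf.fderiv_right ((by simp))).clm_apply contDiff_const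

lemma smooth2_pdy (hf : Smooth2 f) : Smooth2 (pdy f) := by
  have h : (fun p : ℝ × ℝ => pdy f p.1 p.2)
      = fun p : ℝ × ℝ => fderiv ℝ (fun p : ℝ × ℝ => f p.1 p.2) p ((1 : ℝ), (0 : ℝ)) := by
    funext p
    exact pdy_eq_fderiv hf p.1 p.2
  rw [Smooth2, h]
  exact (hf.fderiv_right ((by simp))).clm_apply contDiff_const

lemma clairaut (hf : Smooth2 f) (y s : ℝ) : pdy (pds f) y s = pds (pdy f) y s := by
  set F := (fun p : ℝ × ℝ => f p.1 p.2) with hF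
  have hsym : ∀ u v : ℝ × ℝ,
      fderiv ℝ (fderiv ℝ F) (y, s) u v = fderiv ℝ (fderiv ℝ F) (y, s) v u := by
    intro u v
    exact (hf.contDiffAt.isSymmSndFDerivAt (by rw [minSmoothness_of_isRCLikeNormedField]; exact WithTop.coe_le_coe.mpr le_top)) u v
  have hGd : Differentiable ℝ (fderiv ℝ F) := (hf.fderiv_right (m := (⊤ : ℕ∞)) ((by simp))).differentiable (by simp)
  have key : ∀ (u v : ℝ × ℝ) (c : ℝ → ℝ × ℝ) (t0 : ℝ), HasDerivAt c u t0 → c t0 = (y, s) →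
      deriv (fun t => fderiv ℝ F (c t) v) t0 = fderiv ℝ (fderiv ℝ F) (y, s) u v := by
    intro u v c t0 hc hc0
    have h1 : HasFDerivAt (fun p : ℝ × ℝ => fderiv ℝ F p v)
        ((fderiv ℝ F (y, s)).comp (0 : ℝ × ℝ →L[ℝ] ℝ × ℝ) +
          (fderiv ℝ (fderiv ℝ F) (y, s)).flip v) (c t0) := by
      rw [hc0]
      exact (hGd ((y, s))).hasFDerivAt.clm_apply (hasFDerivAt_const v (y, s))
    have := (h1.comp_hasDerivAt t0 hc).deriv
    simpa [Function.comp_def] using this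
  have hyd : pdy (pds f) y s = fderiv ℝ (fderiv ℝ F) (y, s) (1, 0) (0, 1) := by
    have e1 : (fun y' => pds f y' s) = fun y' => fderiv ℝ F (y', s) ((0:ℝ), (1:ℝ)) := by
      funext y'
      exact pds_eq_fderiv hf y' s
    show deriv (fun y' => pds f y' s) y = _
    rw [e1]
    exact key (1, 0) (0, 1) (fun y' => (y', s)) y
      ((hasDerivAt_id y).prodMk (hasDerivAt_const y s)) rfl
  have hsd : pds (pdy f) y s = fderiv ℝ (fderiv ℝ F) (y, s) (0, 1) (1, 0) := by
    have e1 : (fun s' => pdy f y s') = fun s' => fderiv ℝ F (y, s') ((1:ℝ), (0:ℝ)) := by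
      funext s'
      exact pdy_eq_fderiv hf y s'
    show deriv (fun s' => pdy f y s') s = _
    rw [e1]
    exact key (0, 1) (1, 0) (fun s' => (y, s')) s
      ((hasDerivAt_const s y).prodMk (hasDerivAt_id s)) rfl
  rw [hyd, hsd, hsym]
end AKNSaux

set_option maxHeartbeats 1000000 in
open AKNSaux Real in
/-- from a primary solution `f` (with `f_s ≠ 0`) and `ε = ±1`, the
formulae `q = (e^f/2)(f_y + (ε - f_ys)/f_s)`, `r = (e^{-f}/2)(f_y - (ε - f_ys)/f_s)`,
`b = 2 q_s`, `c = 2 r_s`, `a = (b e^{-f} - c e^{f})/2` yield a solution of the first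
negative AKNS flow: `b_y = 2aq`, `c_y = 2ar` and `a² + bc = ε² = 1`. -/
theorem primary_to_akns
    (f : ℝ → ℝ → ℝ) (hf : Smooth2 f)
    (hfs : ∀ y s, pds f y s ≠ 0)
    (hE : PrimaryEq f)
    (ε : ℝ) (hε : ε = 1 ∨ ε = -1)
    (q r b c a : ℝ → ℝ → ℝ)
    (hq : ∀ y s, q y s = (Real.exp (f y s) / 2)
        * (pdy f y s + (ε - pds (pdy f) y s) / pds f y s))
    (hr : ∀ y s, r y s = (Real.exp (-(f y s)) / 2)
        * (pdy f y s - (ε - pds (pdy f) y s) / pds f y s))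
    (hb : ∀ y s, b y s = 2 * pds q y s)
    (hc : ∀ y s, c y s = 2 * pds r y s)
    (ha : ∀ y s, a y s
        = (b y s * Real.exp (-(f y s)) - c y s * Real.exp (f y s)) / 2) :
    (∀ y s, pdy b y s = 2 * a y s * q y s) ∧
    (∀ y s, pdy c y s = 2 * a y s * r y s) ∧
    (∀ y s, (a y s) ^ 2 + b y s * c y s = ε ^ 2) ∧
    (∀ y s, (a y s) ^ 2 + b y s * c y s = 1) := by
  have hε2 : ε ^ 2 = 1 := by rcases hε with h | h <;> rw [h] <;> norm_num
  have hexp1 : ∀ y s : ℝ, exp (f y s) * exp (-(f y s)) = 1 := by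
    intro y s; rw [← Real.exp_add]; simp
  -- the quantity A = a
  set A : ℝ → ℝ → ℝ := fun y s =>
    pdy f y s * pds f y s - pds (pds (pdy f)) y s / pds f y s
      - (ε - pds (pdy f) y s) * pds (pds f) y s / (pds f y s) ^ 2 with hA
  have hbf : ∀ y s, b y s = exp (f y s) * (A y s + ε) := by
    intro y s
    have hq' : (fun s' => q y s') = fun s' => (exp (f y s') / 2)
        * (pdy f y s' + (ε - pds (pdy f) y s') / pds f y s') := funext fun s' => hq y s'
    have hD : HasDerivAt (fun s' => (exp (f y s') / 2)
        * (pdy f y s' + (ε - pds (pdy f) y s') / pds f y s'))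
        ((exp (f y s) * pds f y s / 2) * (pdy f y s + (ε - pds (pdy f) y s) / pds f y s)
          + (exp (f y s) / 2) * (pds (pdy f) y s
            + ((0 - pds (pds (pdy f)) y s) * pds f y s
                - (ε - pds (pdy f) y s) * pds (pds f) y s) / (pds f y s) ^ 2)) s := by
      exact ((hasDerivS hf y s).exp.div_const 2).mul
        ((hasDerivS (smooth2_pdy hf) y s).add
          (((hasDerivAt_const s ε).sub (hasDerivS (smooth2_pds (smooth2_pdy hf)) y s)).div
            (hasDerivS (smooth2_pds hf) y s) (hfs y s)))
    have hpq : pds q y s = (exp (f y s) * pds f y s / 2)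
        * (pdy f y s + (ε - pds (pdy f) y s) / pds f y s)
          + (exp (f y s) / 2) * (pds (pdy f) y s
            + ((0 - pds (pds (pdy f)) y s) * pds f y s
                - (ε - pds (pdy f) y s) * pds (pds f) y s) / (pds f y s) ^ 2) := by
      show deriv (fun s' => q y s') s = _
      rw [hq']
      exact hD.deriv
    rw [hb, hpq, hA]
    field_simp [hfs y s]
    ring
  have hcf : ∀ y s, c y s = exp (-(f y s)) * (ε - A y s) := by
    intro y s
    have hr' : (fun s' => r y s') = fun s' => (exp (-(f y s')) / 2)
        * (pdy f y s' - (ε - pds (pdy f) y s') / pds f y s') := funext fun s' => hr y s'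
    have hD : HasDerivAt (fun s' => (exp (-(f y s')) / 2)
        * (pdy f y s' - (ε - pds (pdy f) y s') / pds f y s'))
        ((exp (-(f y s)) * -pds f y s / 2)
            * (pdy f y s - (ε - pds (pdy f) y s) / pds f y s)
          + (exp (-(f y s)) / 2) * (pds (pdy f) y s
            - ((0 - pds (pds (pdy f)) y s) * pds f y s
                - (ε - pds (pdy f) y s) * pds (pds f) y s) / (pds f y s) ^ 2)) s := by
      exact (((hasDerivS hf y s).neg.exp.div_const 2).mul
        ((hasDerivS (smooth2_pdy hf) y s).sub
          (((hasDerivAt_const s ε).sub (hasDerivS (smooth2_pds (smooth2_pdy hf)) y s)).div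
            (hasDerivS (smooth2_pds hf) y s) (hfs y s))))
    have hpr : pds r y s = (exp (-(f y s)) * -pds f y s / 2)
            * (pdy f y s - (ε - pds (pdy f) y s) / pds f y s)
          + (exp (-(f y s)) / 2) * (pds (pdy f) y s
            - ((0 - pds (pds (pdy f)) y s) * pds f y s
                - (ε - pds (pdy f) y s) * pds (pds f) y s) / (pds f y s) ^ 2) := by
      show deriv (fun s' => r y s') s = _
      rw [hr']
      exact hD.deriv
    rw [hc, hpr, hA]
    field_simp [hfs y s]
    ring
  have haf : ∀ y s, a y s = A y s := by
    intro y s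
    rw [ha, hbf, hcf]
    linear_combination (A y s) * hexp1 y s
  have part3 : ∀ y s, (a y s) ^ 2 + b y s * c y s = ε ^ 2 := by
    intro y s
    rw [haf, hbf, hcf]
    linear_combination ((A y s + ε) * (ε - A y s)) * hexp1 y s
  have hfyfun : pdy (pds f) = pds (pdy f) := funext fun a => funext fun b => clairaut hf a b
  have hfyfun2 : pdy (pds (pdy f)) = pds (pdy (pdy f)) :=
    funext fun a => funext fun b => clairaut (smooth2_pdy hf) a b
  have part1 : ∀ y s, pdy b y s = 2 * a y s * q y s := by
    intro y s
    have hv : HasDerivAt (fun y' => pds f y' s) (pds (pdy f) y s) y := by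
      have h := hasDerivY (smooth2_pds hf) y s
      rwa [clairaut hf y s] at h
    have hu : HasDerivAt (fun y' => pdy f y' s) (pdy (pdy f) y s) y :=
      hasDerivY (smooth2_pdy hf) y s
    have hw : HasDerivAt (fun y' => pds (pdy f) y' s) (pds (pdy (pdy f)) y s) y := by
      have h := hasDerivY (smooth2_pds (smooth2_pdy hf)) y s
      rwa [clairaut (smooth2_pdy hf) y s] at h
    have hvs : HasDerivAt (fun y' => pds (pds f) y' s) (pds (pds (pdy f)) y s) y := by
      have h := hasDerivY (smooth2_pds (smooth2_pds hf)) y s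
      rwa [clairaut (smooth2_pds hf) y s, hfyfun] at h
    have hws : HasDerivAt (fun y' => pds (pds (pdy f)) y' s) (pds (pds (pdy (pdy f))) y s) y := by
      have h := hasDerivY (smooth2_pds (smooth2_pds (smooth2_pdy hf))) y s
      rwa [clairaut (smooth2_pds (smooth2_pdy hf)) y s, hfyfun2] at h
    have hAd : HasDerivAt (fun y' => A y' s)
        ((pdy (pdy f) y s * pds f y s + pdy f y s * pds (pdy f) y s)
          - (pds (pds (pdy (pdy f))) y s * pds f y s
              - pds (pds (pdy f)) y s * pds (pdy f) y s) / (pds f y s) ^ 2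
          - (((0 - pds (pdy (pdy f)) y s) * pds (pds f) y s
                + (ε - pds (pdy f) y s) * pds (pds (pdy f)) y s) * (pds f y s) ^ 2
              - (ε - pds (pdy f) y s) * pds (pds f) y s
                  * ((2 : ℕ) * pds f y s ^ (2 - 1) * pds (pdy f) y s)) / ((pds f y s) ^ 2) ^ 2) y := by
      rw [hA]
      exact ((hu.mul hv).sub (hws.div hv (hfs y s))).sub
        ((((hasDerivAt_const y ε).sub hw).mul hvs).div (hv.pow 2) (pow_ne_zero 2 (hfs y s)))
    have hDb := ((hasDerivY hf y s).exp.mul (hAd.add_const ε))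
    have hb' : (fun y' => b y' s) = fun y' => exp (f y' s) * (A y' s + ε) :=
      funext fun y' => hbf y' s
    have hpdyb : pdy b y s = exp (f y s) * pdy f y s * (A y s + ε)
        + exp (f y s) * ((pdy (pdy f) y s * pds f y s + pdy f y s * pds (pdy f) y s)
          - (pds (pds (pdy (pdy f))) y s * pds f y s
              - pds (pds (pdy f)) y s * pds (pdy f) y s) / (pds f y s) ^ 2
          - (((0 - pds (pdy (pdy f)) y s) * pds (pds f) y s
                + (ε - pds (pdy f) y s) * pds (pds (pdy f)) y s) * (pds f y s) ^ 2
              - (ε - pds (pdy f) y s) * pds (pds f) y s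
                  * ((2 : ℕ) * pds f y s ^ (2 - 1) * pds (pdy f) y s)) / ((pds f y s) ^ 2) ^ 2) := by
      show deriv (fun y' => b y' s) y = _
      rw [hb']
      exact hDb.deriv
    have hE' := hE y s
    rw [hpdyb, haf, hq]
    simp only [hA]
    have hv0 := hfs y s
    generalize pds (pds (pdy (pdy f))) y s = uyss at *
    generalize pds (pdy (pdy f)) y s = uys at *
    generalize pdy (pdy f) y s = uy at *
    generalize pds (pds (pdy f)) y s = ws at *
    generalize pds (pds f) y s = vs at *
    generalize pds (pdy f) y s = w at *
    generalize pdy f y s = u at *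
    generalize pds f y s = v at *
    generalize Real.exp (f y s) = Ex at *
    field_simp at hE'
    field_simp
    linear_combination (Ex * v) * hE' + (Ex * v * vs) * hε2
  have part2 : ∀ y s, pdy c y s = 2 * a y s * r y s := by
    intro y s
    have hv : HasDerivAt (fun y' => pds f y' s) (pds (pdy f) y s) y := by
      have h := hasDerivY (smooth2_pds hf) y s
      rwa [clairaut hf y s] at h
    have hu : HasDerivAt (fun y' => pdy f y' s) (pdy (pdy f) y s) y :=
      hasDerivY (smooth2_pdy hf) y s
    have hw : HasDerivAt (fun y' => pds (pdy f) y' s) (pds (pdy (pdy f)) y s) y := by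
      have h := hasDerivY (smooth2_pds (smooth2_pdy hf)) y s
      rwa [clairaut (smooth2_pdy hf) y s] at h
    have hvs : HasDerivAt (fun y' => pds (pds f) y' s) (pds (pds (pdy f)) y s) y := by
      have h := hasDerivY (smooth2_pds (smooth2_pds hf)) y s
      rwa [clairaut (smooth2_pds hf) y s, hfyfun] at h
    have hws : HasDerivAt (fun y' => pds (pds (pdy f)) y' s) (pds (pds (pdy (pdy f))) y s) y := by
      have h := hasDerivY (smooth2_pds (smooth2_pds (smooth2_pdy hf))) y s
      rwa [clairaut (smooth2_pds (smooth2_pdy hf)) y s, hfyfun2] at h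
    have hAd : HasDerivAt (fun y' => A y' s)
        ((pdy (pdy f) y s * pds f y s + pdy f y s * pds (pdy f) y s)
          - (pds (pds (pdy (pdy f))) y s * pds f y s
              - pds (pds (pdy f)) y s * pds (pdy f) y s) / (pds f y s) ^ 2
          - (((0 - pds (pdy (pdy f)) y s) * pds (pds f) y s
                + (ε - pds (pdy f) y s) * pds (pds (pdy f)) y s) * (pds f y s) ^ 2
              - (ε - pds (pdy f) y s) * pds (pds f) y s
                  * ((2 : ℕ) * pds f y s ^ (2 - 1) * pds (pdy f) y s)) / ((pds f y s) ^ 2) ^ 2) y := by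
      rw [hA]
      exact ((hu.mul hv).sub (hws.div hv (hfs y s))).sub
        ((((hasDerivAt_const y ε).sub hw).mul hvs).div (hv.pow 2) (pow_ne_zero 2 (hfs y s)))
    have hDc := (((hasDerivY hf y s).neg.exp).mul ((hasDerivAt_const y ε).sub hAd))
    have hc' : (fun y' => c y' s) = fun y' => exp (-(f y' s)) * (ε - A y' s) :=
      funext fun y' => hcf y' s
    have hpdyc : pdy c y s = exp (-(f y s)) * -pdy f y s * (ε - A y s)
        + exp (-(f y s)) * (0 - ((pdy (pdy f) y s * pds f y s + pdy f y s * pds (pdy f) y s)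
          - (pds (pds (pdy (pdy f))) y s * pds f y s
              - pds (pds (pdy f)) y s * pds (pdy f) y s) / (pds f y s) ^ 2
          - (((0 - pds (pdy (pdy f)) y s) * pds (pds f) y s
                + (ε - pds (pdy f) y s) * pds (pds (pdy f)) y s) * (pds f y s) ^ 2
              - (ε - pds (pdy f) y s) * pds (pds f) y s
                  * ((2 : ℕ) * pds f y s ^ (2 - 1) * pds (pdy f) y s)) / ((pds f y s) ^ 2) ^ 2)) := by
      show deriv (fun y' => c y' s) y = _
      rw [hc']
      exact hDc.deriv
    have hE' := hE y s
    rw [hpdyc, haf, hr]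
    simp only [hA]
    have hv0 := hfs y s
    generalize pds (pds (pdy (pdy f))) y s = uyss at *
    generalize pds (pdy (pdy f)) y s = uys at *
    generalize pdy (pdy f) y s = uy at *
    generalize pds (pds (pdy f)) y s = ws at *
    generalize pds (pds f) y s = vs at *
    generalize pds (pdy f) y s = w at *
    generalize pdy f y s = u at *
    generalize pds f y s = v at *
    generalize Real.exp (-(f y s)) = Ex at *
    field_simp at hE'
    field_simp
    linear_combination (-(Ex * v)) * hE' + (-(Ex * v * vs)) * hε2
  exact ⟨part1, part2, part3, fun y s => by rw [part3 y s, hε2]⟩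
end

section
/- For p₁ > 0 and x₀ ∈ ℝ, the functions u(x) = √(1 + e^{2(x-x₀)})/p₁, ρ(x) = 1/(p₁ √(1 + e^{2(x-x₀)})) satisfy the stationary 2-CH system with κ = 0: u m_x + 2 m u_x - ρ ρ_x = 0 and (ρ u)_x = 0, where m = u - u_xx. -/
/-!
Write `e = e^{2(x - x₀)}` and `s = √(1 + e)`, so that `s' = e / s` and
`s'' = e (2 + e) / s³`; hence `s - s'' = ((1 + e)² - 2e - e²) / s³ = 1 / s³`.
Thus with `c = 1 / p₁²` we have `ρ = c / u` and `m = u - u'' = c² / u³`,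
so `ρ u` is constant and `u m' + 2 m u' = (u² m)' / u = (c² / u)' / u = -c² u' / u³ = ρ ρ'`.
-/

open Real

noncomputable def peakonProfile (x₀ x : ℝ) : ℝ := √(1 + exp (2 * (x - x₀)))

namespace peakonProfile

variable (x₀ x : ℝ)

lemma pos : 0 < peakonProfile x₀ x := sqrt_pos.mpr (by positivity)

lemma sq : peakonProfile x₀ x ^ 2 = 1 + exp (2 * (x - x₀)) := sq_sqrt (by positivity)

lemma hasDerivAt :
    HasDerivAt (peakonProfile x₀) (exp (2 * (x - x₀)) / peakonProfile x₀ x) x := by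
  have hexp : HasDerivAt (fun y => 1 + exp (2 * (y - x₀))) (2 * exp (2 * (x - x₀))) x := by
    simpa [mul_comm] using ((((hasDerivAt_id x).sub_const x₀).const_mul 2).exp).const_add 1
  refine (hexp.sqrt (by positivity)).congr_deriv ?_
  exact mul_div_mul_left _ _ two_ne_zero

lemma deriv_eq :
    deriv (peakonProfile x₀) = fun y => exp (2 * (y - x₀)) / peakonProfile x₀ y :=
  funext fun y => (hasDerivAt x₀ y).deriv

lemma hasDerivAt_deriv :
    HasDerivAt (deriv (peakonProfile x₀))
      (exp (2 * (x - x₀)) * (2 + exp (2 * (x - x₀))) / peakonProfile x₀ x ^ 3) x := by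
  have hexp : HasDerivAt (fun y => exp (2 * (y - x₀))) (2 * exp (2 * (x - x₀))) x := by
    simpa [mul_comm] using (((hasDerivAt_id x).sub_const x₀).const_mul 2).exp
  rw [deriv_eq]
  refine (hexp.fun_div (hasDerivAt x₀ x) (pos x₀ x).ne').congr_deriv ?_
  have := (pos x₀ x).ne'
  field_simp
  linear_combination 2 * sq x₀ x

lemma sub_deriv_deriv :
    peakonProfile x₀ x - deriv (deriv (peakonProfile x₀)) x = 1 / peakonProfile x₀ x ^ 3 := by
  rw [(hasDerivAt_deriv x₀ x).deriv]
  have := (pos x₀ x).ne'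
  field_simp
  linear_combination (peakonProfile x₀ x ^ 2 + 1 + exp (2 * (x - x₀))) * sq x₀ x

end peakonProfile

lemma stationary_momentum_eq_zero_of_const_div {u : ℝ → ℝ} {x : ℝ} (c : ℝ)
    (hu : DifferentiableAt ℝ u x) (hux : u x ≠ 0) :
    u x * deriv (fun y => c ^ 2 / u y ^ 3) x + 2 * (c ^ 2 / u x ^ 3) * deriv u x
      - c / u x * deriv (fun y => c / u y) x = 0 := by
  rw [deriv_const_div _ (hu.fun_pow 3) (pow_ne_zero 3 hux), deriv_fun_pow hu,
    deriv_const_div _ hu hux]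
  field_simp
  ring

/-- the stationary peakon profile.  For `p₁ > 0`, `x₀ ∈ ℝ`, the functions
`u(x) = √(1 + e^{2(x-x₀)})/p₁` and `ρ(x) = 1/(p₁ √(1 + e^{2(x-x₀)}))` satisfy the
stationary 2-CH system with `κ = 0`: `u m' + 2 m u' - ρ ρ' = 0` and `(ρ u)' = 0`,
where `m = u - u''`. -/
theorem stationary_peakon
    (p₁ x₀ : ℝ) (hp₁ : 0 < p₁)
    (u ρ m : ℝ → ℝ)
    (hu : ∀ x, u x = Real.sqrt (1 + Real.exp (2 * (x - x₀))) / p₁)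
    (hρ : ∀ x, ρ x = 1 / (p₁ * Real.sqrt (1 + Real.exp (2 * (x - x₀)))))
    (hm : ∀ x, m x = u x - deriv (deriv u) x) :
    (∀ x, u x * deriv m x + 2 * m x * deriv u x - ρ x * deriv ρ x = 0) ∧
    (∀ x, deriv (fun x => ρ x * u x) x = 0) := by
  have hu_eq : u = fun x => peakonProfile x₀ x / p₁ := funext hu
  have hu_ne (x : ℝ) : u x ≠ 0 := by
    rw [hu_eq]; exact div_ne_zero (peakonProfile.pos x₀ x).ne' hp₁.ne'
  have hρ_eq : ρ = fun x => (p₁ ^ 2)⁻¹ / u x := by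
    funext x
    have := (peakonProfile.pos x₀ x).ne'
    simp only [hρ, hu_eq, peakonProfile] at this ⊢
    field_simp
  have hm_eq : m = fun x => (p₁ ^ 2)⁻¹ ^ 2 / u x ^ 3 := by
    funext x
    have hu'' : deriv (deriv u) x = deriv (deriv (peakonProfile x₀)) x / p₁ := by
      have hu' : deriv u = fun y => deriv (peakonProfile x₀) y / p₁ := by
        rw [hu_eq]; exact funext fun _ => deriv_div_const _
      rw [hu', deriv_div_const]
    rw [hm, hu'', hu_eq]
    dsimp only
    rw [← sub_div, peakonProfile.sub_deriv_deriv]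
    field_simp [(peakonProfile.pos x₀ x).ne']
  have hu_diff (x : ℝ) : DifferentiableAt ℝ u x := by
    rw [hu_eq]; exact ((peakonProfile.hasDerivAt x₀ x).div_const p₁).differentiableAt
  refine ⟨fun x => ?_, fun x => ?_⟩
  · rw [hρ_eq, hm_eq]
    exact stationary_momentum_eq_zero_of_const_div _ (hu_diff x) (hu_ne x)
  · have hρu : (fun x => ρ x * u x) = fun _ => (p₁ ^ 2)⁻¹ := by
      funext x; rw [hρ_eq]; field_simp [hu_ne x]
    rw [hρu, deriv_const]
end
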